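/- First converse step in the proof of Theorem 3 (inequality (refnoisy1)). Let (X_{1i},W_i), i=1,…,n, be i.i.d.; let K1 be independent of (X1^n,W^n); and let Ỹ1^n be any random vector jointly distributed with (K1,X1^n,W^n). Define U_{1i} = (K1, X_{1,i+1}^n, Ỹ1^n, W_{∼i}). Then ∑_{i=1}^n H(Ỹ_{1i}) ≥ H(Ỹ1^n) ≥ I(Ỹ1^n; X1^n | K1, W^n) ≥ ∑_{i=1}^n I(U_{1i}; X_{1i} | W_i). In particular, with T uniform on [1:n] independent of everything else and (U1, X1, W, Ỹ1) := (U_{1T}, X_{1T}, W_T, Ỹ_{1T}), this gives H(Ỹ1|T) ≥ I(U1; X1 | W, T). -/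

import Mathlib

/-!
Subadditivity of entropy gives the first inequality, and
`I(Ỹⁿ; Xⁿ | K, Wⁿ) ≤ H(Ỹⁿ | K, Wⁿ) ≤ H(Ỹⁿ)` the second. For the third, the chain rule writes
`I(Ỹⁿ; Xⁿ | K, Wⁿ)` as `∑ᵢ I(Ỹⁿ; Xᵢ | X_{i+1}ⁿ, K, Wⁿ)`. Writing `Uᵢ = (Cᵢ, Ỹⁿ)` with
`Cᵢ = (K, X_{i+1}ⁿ, W_{∼i})`, we get `I(Uᵢ; Xᵢ | Wᵢ) = I(Cᵢ; Xᵢ | Wᵢ) + I(Ỹⁿ; Xᵢ | Cᵢ, Wᵢ)`.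
The first term vanishes because the product form of the law of `(K, Xⁿ, Wⁿ)` makes `(Xᵢ, Wᵢ)`
independent of `(K, X_{∼i}, W_{∼i})`, and the second is the `i`-th summand of the chain rule,
so the third inequality is an equality.
-/

open scoped BigOperators

namespace SecCoord

/-- `p` is a probability mass function on the finite type `α`. -/
def IsPMF {α : Type*} [Fintype α] (p : α → ℝ) : Prop :=
  (∀ a, 0 ≤ p a) ∧ ∑ a, p a = 1

/-- Total variation distance between two pmfs: half the `ℓ¹`-distance. -/
noncomputable def TV {α : Type*} [Fintype α] (p q : α → ℝ) : ℝ :=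
  (1 / 2) * ∑ a, |p a - q a|

/-- Distribution (pushforward pmf) of a random variable `X : Ω → α` under `μ`. -/
noncomputable def dist {Ω α : Type*} [Fintype Ω] (μ : Ω → ℝ) (X : Ω → α) : α → ℝ :=
  fun a => ∑ ω, Set.indicator {ω' | X ω' = a} μ ω

/-- Shannon entropy (in bits) of the random variable `X` under `μ`. -/
noncomputable def H {Ω α : Type*} [Fintype Ω] [Fintype α] (μ : Ω → ℝ) (X : Ω → α) : ℝ :=
  -∑ a, dist μ X a * Real.logb 2 (dist μ X a)

/-- Conditional Shannon entropy `H(X | Z)` (in bits). -/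
noncomputable def condEnt {Ω α β : Type*} [Fintype Ω] [Fintype α] [Fintype β]
    (μ : Ω → ℝ) (X : Ω → α) (Z : Ω → β) : ℝ :=
  H μ (fun ω => (X ω, Z ω)) - H μ Z

/-- Mutual information `I(X; Y)` (in bits). -/
noncomputable def MI {Ω α β : Type*} [Fintype Ω] [Fintype α] [Fintype β]
    (μ : Ω → ℝ) (X : Ω → α) (Y : Ω → β) : ℝ :=
  H μ X + H μ Y - H μ (fun ω => (X ω, Y ω))

/-- Conditional mutual information `I(X; Y | Z)` (in bits). -/
noncomputable def CMI {Ω α β γ : Type*} [Fintype Ω] [Fintype α] [Fintype β] [Fintype γ]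
    (μ : Ω → ℝ) (X : Ω → α) (Y : Ω → β) (Z : Ω → γ) : ℝ :=
  (H μ (fun ω => (X ω, Z ω))) + (H μ (fun ω => (Y ω, Z ω)))
    - (H μ (fun ω => (X ω, Y ω, Z ω))) - H μ Z

open Real

section Distribution

variable {Ω α β γ : Type*} [Fintype Ω] (μ : Ω → ℝ)

lemma dist_apply [DecidableEq α] (X : Ω → α) (a : α) :
    dist μ X a = ∑ ω, if X ω = a then μ ω else 0 := by
  simp only [dist, Set.indicator_apply, Set.mem_ofPred_eq]

lemma dist_congr {X : Ω → α} {Y : Ω → β} {a : α} {b : β} (h : ∀ ω, X ω = a ↔ Y ω = b) :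
    dist μ X a = dist μ Y b := by
  classical
  simp only [dist_apply, h]

lemma dist_nonneg {μ : Ω → ℝ} (hμ : ∀ ω, 0 ≤ μ ω) (X : Ω → α) (a : α) : 0 ≤ dist μ X a := by
  classical
  rw [dist_apply]
  exact Finset.sum_nonneg fun ω _ => by split <;> simp [hμ ω]

lemma dist_pos_of_pos {μ : Ω → ℝ} (hμ : ∀ ω, 0 ≤ μ ω) (X : Ω → α) {ω : Ω} (hω : 0 < μ ω) :
    0 < dist μ X (X ω) := by
  classical
  rw [dist_apply]
  refine hω.trans_le ?_
  have := Finset.single_le_sum (f := fun ω' => if X ω' = X ω then μ ω' else 0)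
    (fun ω' _ => by split <;> simp [hμ ω']) (Finset.mem_univ ω)
  simpa using this

variable [Fintype α]

lemma sum_dist_mul (X : Ω → α) (F : α → ℝ) :
    ∑ a, dist μ X a * F a = ∑ ω, μ ω * F (X ω) := by
  classical
  simp only [dist_apply, Finset.sum_mul, ite_mul, zero_mul]
  rw [Finset.sum_comm]
  simp

lemma dist_comp [DecidableEq β] (X : Ω → α) (φ : α → β) (b : β) :
    dist μ (fun ω => φ (X ω)) b = ∑ a, if φ a = b then dist μ X a else 0 := by
  classical
  rw [dist_apply]
  simpa [mul_ite, ite_mul] using (sum_dist_mul μ X fun a => if φ a = b then 1 else 0).symm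

lemma sum_dist {μ : Ω → ℝ} (hμ : IsPMF μ) (X : Ω → α) : ∑ a, dist μ X a = 1 := by
  simpa [hμ.2] using sum_dist_mul μ X fun _ => 1

variable [Fintype β] [Fintype γ]

lemma dist_fst_eq_sum (A : Ω → α) (C : Ω → γ) (a : α) :
    dist μ A a = ∑ c, dist μ (fun ω => (A ω, C ω)) (a, c) := by
  classical
  rw [dist_comp μ (fun ω => (A ω, C ω)) Prod.fst, Fintype.sum_prod_type, Finset.sum_comm]
  simp

lemma dist_snd_eq_sum (A : Ω → α) (C : Ω → γ) (c : γ) :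
    dist μ C c = ∑ a, dist μ (fun ω => (A ω, C ω)) (a, c) := by
  classical
  rw [dist_comp μ (fun ω => (A ω, C ω)) Prod.snd, Fintype.sum_prod_type]
  simp

lemma dist_outer_eq_sum (A : Ω → α) (B : Ω → β) (Z : Ω → γ) (a : α) (z : γ) :
    dist μ (fun ω => (A ω, Z ω)) (a, z) = ∑ b, dist μ (fun ω => (A ω, B ω, Z ω)) (a, b, z) := by
  classical
  rw [dist_comp μ (fun ω => (A ω, B ω, Z ω)) fun p => (p.1, p.2.2)]
  simp only [Fintype.sum_prod_type, Prod.mk.injEq, ite_and]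
  rw [Finset.sum_comm]
  simp

end Distribution

section Entropy

variable {Ω α β γ δ : Type*} [Fintype Ω] [Fintype α] [Fintype β] [Fintype γ] [Fintype δ]
  (μ : Ω → ℝ)

lemma H_eq_neg_sum (X : Ω → α) : H μ X = -∑ ω, μ ω * logb 2 (dist μ X (X ω)) := by
  rw [H, sum_dist_mul μ X fun a => logb 2 (dist μ X a)]

lemma H_congr {X : Ω → α} {Y : Ω → β} (h : ∀ ω ω', X ω = X ω' ↔ Y ω = Y ω') :
    H μ X = H μ Y := by
  simp only [H_eq_neg_sum, dist_congr μ (h · _)]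

lemma H_add_H_eq_neg_sum {μ : Ω → ℝ} (hμ : ∀ ω, 0 ≤ μ ω) (A : Ω → α) (C : Ω → γ) :
    H μ A + H μ C = -∑ ω, μ ω * logb 2 (dist μ A (A ω) * dist μ C (C ω)) := by
  rw [H_eq_neg_sum μ A, H_eq_neg_sum μ C, ← neg_add, ← Finset.sum_add_distrib]
  congr 1
  refine Finset.sum_congr rfl fun ω _ => ?_
  rcases (hμ ω).eq_or_lt with h0 | hpos
  · simp [← h0]
  · rw [logb_mul (dist_pos_of_pos hμ A hpos).ne' (dist_pos_of_pos hμ C hpos).ne', mul_add]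

lemma logb_sub_logb_le {p q : ℝ} (hp : 0 < p) (hq : 0 < q) :
    logb 2 q - logb 2 p ≤ (q / p - 1) / log 2 := by
  rw [← logb_div hq.ne' hp.ne', logb, div_le_div_iff_of_pos_right (log_pos one_lt_two)]
  exact log_le_sub_one_of_pos (div_pos hq hp)

lemma H_le_neg_sum_logb {μ : Ω → ℝ} (hμ : IsPMF μ) (X : Ω → α) (q : α → ℝ)
    (hq0 : ∀ a, 0 ≤ q a) (hq1 : ∑ a, q a ≤ 1) (hdom : ∀ ω, 0 < μ ω → 0 < q (X ω)) :
    H μ X ≤ -∑ ω, μ ω * logb 2 (q (X ω)) := by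
  set p := dist μ X
  have hterm : ∀ ω, μ ω * logb 2 (q (X ω)) - μ ω * logb 2 (p (X ω))
      ≤ (μ ω * (q (X ω) / p (X ω)) - μ ω) / log 2 := by
    intro ω
    rcases (hμ.1 ω).eq_or_lt with h0 | hpos
    · simp [← h0]
    · have := mul_le_mul_of_nonneg_left
        (logb_sub_logb_le (dist_pos_of_pos hμ.1 X hpos) (hdom ω hpos)) hpos.le
      calc _ = μ ω * (logb 2 (q (X ω)) - logb 2 (p (X ω))) := by ring
        _ ≤ _ := this
        _ = _ := by ring
  have hratio : ∑ ω, μ ω * (q (X ω) / p (X ω)) ≤ 1 := by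
    rw [← sum_dist_mul μ X fun a => q a / p a]
    refine le_trans (Finset.sum_le_sum fun a _ => ?_) hq1
    rcases (dist_nonneg hμ.1 X a).eq_or_lt with h0 | hpos
    · simp [p, ← h0, hq0 a]
    · rw [mul_div_cancel₀ _ hpos.ne']
  have hsum := Finset.sum_le_sum fun ω (_ : ω ∈ Finset.univ) => hterm ω
  rw [Finset.sum_sub_distrib, ← Finset.sum_div, Finset.sum_sub_distrib, hμ.2] at hsum
  have : (∑ ω, μ ω * (q (X ω) / p (X ω)) - 1) / log 2 ≤ 0 :=
    div_nonpos_of_nonpos_of_nonneg (by linarith) (log_nonneg one_le_two)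
  rw [H_eq_neg_sum]
  linarith

lemma H_pair_le_add {μ : Ω → ℝ} (hμ : IsPMF μ) (A : Ω → α) (C : Ω → γ) :
    H μ (fun ω => (A ω, C ω)) ≤ H μ A + H μ C := by
  rw [H_add_H_eq_neg_sum hμ.1]
  refine H_le_neg_sum_logb hμ (fun ω => (A ω, C ω)) (fun p => dist μ A p.1 * dist μ C p.2)
    (fun p => mul_nonneg (dist_nonneg hμ.1 A p.1) (dist_nonneg hμ.1 C p.2)) ?_
    (fun ω hω => mul_pos (dist_pos_of_pos hμ.1 A hω) (dist_pos_of_pos hμ.1 C hω))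
  simp [Fintype.sum_prod_type, ← Finset.mul_sum, sum_dist hμ]

lemma H_le_H_pair {μ : Ω → ℝ} (hμ : ∀ ω, 0 ≤ μ ω) (A : Ω → α) (C : Ω → γ) :
    H μ C ≤ H μ (fun ω => (A ω, C ω)) := by
  rw [H_eq_neg_sum, H_eq_neg_sum, neg_le_neg_iff]
  refine Finset.sum_le_sum fun ω _ => ?_
  rcases (hμ ω).eq_or_lt with h0 | hpos
  · simp [← h0]
  · have hle : dist μ (fun ω => (A ω, C ω)) (A ω, C ω) ≤ dist μ C (C ω) := by
      rw [dist_snd_eq_sum μ A C]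
      exact Finset.single_le_sum (f := fun a => dist μ (fun ω => (A ω, C ω)) (a, C ω))
        (fun a _ => dist_nonneg hμ _ _) (Finset.mem_univ (A ω))
    exact mul_le_mul_of_nonneg_left
      (logb_le_logb_of_le one_lt_two (dist_pos_of_pos hμ _ hpos) hle) hpos.le

lemma H_pi_le_sum {μ : Ω → ℝ} (hμ : IsPMF μ) {m : ℕ} (Y : Ω → Fin m → β) :
    H μ Y ≤ ∑ i, H μ (fun ω => Y ω i) := by
  induction m with
  | zero =>
    simpa using H_le_neg_sum_logb hμ Y (fun _ => 1) (fun _ => zero_le_one)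
      (by simp) (fun _ _ => one_pos)
  | succ m ih =>
    have hsplit : H μ Y = H μ (fun ω => (Y ω 0, fun j : Fin m => Y ω j.succ)) :=
      H_congr μ fun ω ω' => by simp only [Prod.mk.injEq, funext_iff, Fin.forall_fin_succ]
    rw [hsplit, Fin.sum_univ_succ]
    linarith [H_pair_le_add hμ (fun ω => Y ω 0) (fun ω (j : Fin m) => Y ω j.succ),
      ih fun ω j => Y ω j.succ]

lemma CMI_le_H_left {μ : Ω → ℝ} (hμ : IsPMF μ) (X : Ω → α) (Y : Ω → β) (Z : Ω → γ) :
    CMI μ X Y Z ≤ H μ X := by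
  have := H_pair_le_add hμ X Z
  have := H_le_H_pair hμ.1 X fun ω => (Y ω, Z ω)
  unfold CMI
  linarith

lemma dist_pair_eq_mul_of_factor {μ : Ω → ℝ} (hμ : IsPMF μ) {A : Ω → α} {C : Ω → γ}
    {f : α → ℝ} {g : γ → ℝ} (hfac : ∀ a c, dist μ (fun ω => (A ω, C ω)) (a, c) = f a * g c)
    (a : α) (c : γ) :
    dist μ (fun ω => (A ω, C ω)) (a, c) = dist μ A a * dist μ C c := by
  have hA : dist μ A a = f a * ∑ c, g c := by
    simp only [dist_fst_eq_sum μ A C, hfac, Finset.mul_sum]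
  have hC : dist μ C c = (∑ a, f a) * g c := by
    simp only [dist_snd_eq_sum μ A C, hfac, Finset.sum_mul]
  have hFG : (∑ a, f a) * ∑ c, g c = 1 := by
    simpa [hfac, ← Finset.sum_mul, ← Finset.mul_sum, Fintype.sum_prod_type]
      using sum_dist hμ fun ω => (A ω, C ω)
  rw [hA, hC, hfac]
  linear_combination (f a * g c) * hFG.symm

lemma H_pair_eq_add_of_factor {μ : Ω → ℝ} (hμ : IsPMF μ) {A : Ω → α} {C : Ω → γ}
    {f : α → ℝ} {g : γ → ℝ} (hfac : ∀ a c, dist μ (fun ω => (A ω, C ω)) (a, c) = f a * g c) :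
    H μ (fun ω => (A ω, C ω)) = H μ A + H μ C := by
  rw [H_add_H_eq_neg_sum hμ.1, H_eq_neg_sum]
  simp only [dist_pair_eq_mul_of_factor hμ hfac]

lemma CMI_eq_zero_of_factor {μ : Ω → ℝ} (hμ : IsPMF μ) {A : Ω → α} {B : Ω → β} {Z : Ω → γ}
    {f : α → ℝ} {g : β × γ → ℝ}
    (hfac : ∀ a b z, dist μ (fun ω => (A ω, B ω, Z ω)) (a, b, z) = f a * g (b, z)) :
    CMI μ A B Z = 0 := by
  have hABZ : H μ (fun ω => (A ω, B ω, Z ω)) = H μ A + H μ (fun ω => (B ω, Z ω)) :=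
    H_pair_eq_add_of_factor hμ (C := fun ω => (B ω, Z ω)) fun a p => hfac a p.1 p.2
  have hAZ : H μ (fun ω => (A ω, Z ω)) = H μ A + H μ Z :=
    H_pair_eq_add_of_factor hμ (f := f) (g := fun z => ∑ b, g (b, z)) fun a z => by
      simp only [dist_outer_eq_sum μ A B Z, hfac, Finset.mul_sum]
  unfold CMI
  rw [hABZ, hAZ]
  ring

lemma CMI_congr {α' β' γ' : Type*} [Fintype α'] [Fintype β'] [Fintype γ']
    {X : Ω → α} {X' : Ω → α'} {Y : Ω → β} {Y' : Ω → β'} {Z : Ω → γ} {Z' : Ω → γ'}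
    (hX : ∀ ω ω', X ω = X ω' ↔ X' ω = X' ω') (hY : ∀ ω ω', Y ω = Y ω' ↔ Y' ω = Y' ω')
    (hZ : ∀ ω ω', Z ω = Z ω' ↔ Z' ω = Z' ω') :
    CMI μ X Y Z = CMI μ X' Y' Z' := by
  unfold CMI
  rw [H_congr μ (X := fun ω => (X ω, Z ω)) (Y := fun ω => (X' ω, Z' ω))
      fun ω ω' => by simp only [Prod.mk.injEq, hX ω ω', hZ ω ω'],
    H_congr μ (X := fun ω => (Y ω, Z ω)) (Y := fun ω => (Y' ω, Z' ω))
      fun ω ω' => by simp only [Prod.mk.injEq, hY ω ω', hZ ω ω'],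
    H_congr μ (X := fun ω => (X ω, Y ω, Z ω)) (Y := fun ω => (X' ω, Y' ω, Z' ω))
      fun ω ω' => by simp only [Prod.mk.injEq, hX ω ω', hY ω ω', hZ ω ω'],
    H_congr μ hZ]

lemma CMI_pair_left (C : Ω → α) (D : Ω → δ) (B : Ω → β) (Z : Ω → γ) :
    CMI μ (fun ω => (C ω, D ω)) B Z = CMI μ C B Z + CMI μ D B (fun ω => (C ω, Z ω)) := by
  have e1 : H μ (fun ω => (D ω, C ω, Z ω)) = H μ (fun ω => ((C ω, D ω), Z ω)) :=
    H_congr μ fun ω ω' => by simp only [Prod.mk.injEq]; tauto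
  have e2 : H μ (fun ω => (B ω, C ω, Z ω)) = H μ (fun ω => (C ω, B ω, Z ω)) :=
    H_congr μ fun ω ω' => by simp only [Prod.mk.injEq]; tauto
  have e3 : H μ (fun ω => (D ω, B ω, C ω, Z ω)) = H μ (fun ω => ((C ω, D ω), B ω, Z ω)) :=
    H_congr μ fun ω ω' => by simp only [Prod.mk.injEq]; tauto
  unfold CMI
  rw [e1, e2, e3]
  ring

end Entropy

section ChainRule

variable {Ω α β γ : Type*} [Fintype Ω] [Fintype α] [Fintype β] [Fintype γ] (μ : Ω → ℝ)

lemma Fin.forall_val_le_iff {n : ℕ} (i : Fin n) (p : Fin n → Prop) :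
    (∀ j : Fin n, i.1 ≤ j.1 → p j) ↔ p i ∧ ∀ j, i < j → p j := by
  refine ⟨fun h => ⟨h i le_rfl, fun j hj => h j hj.le⟩, fun ⟨hi, h⟩ j hj => ?_⟩
  rcases hj.eq_or_lt with hij | hij
  · exact Fin.ext hij ▸ hi
  · exact h j hij

lemma CMI_pi_right_eq_sum {n : ℕ} (Y : Ω → β) (X : Ω → Fin n → α) (Z : Ω → γ) :
    CMI μ Y X Z = ∑ i : Fin n,
      CMI μ Y (fun ω => X ω i) (fun ω => (fun j : {j : Fin n // i < j} => X ω j, Z ω)) := by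
  set F : ℕ → ℝ := fun m => H μ (fun ω => (fun j : {j : Fin n // m ≤ j.1} => X ω j, Z ω))
  set G : ℕ → ℝ := fun m =>
    H μ (fun ω => (Y ω, fun j : {j : Fin n // m ≤ j.1} => X ω j, Z ω))
  have hterm : ∀ i : Fin n,
      CMI μ Y (fun ω => X ω i) (fun ω => (fun j : {j : Fin n // i < j} => X ω j, Z ω))
        = (F i - F (i + 1)) - (G i - G (i + 1)) := by
    intro i
    have hF : H μ (fun ω => (X ω i, fun j : {j : Fin n // i < j} => X ω j, Z ω)) = F i :=
      H_congr μ fun ω ω' => by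
        simp only [Prod.mk.injEq, funext_iff, Subtype.forall, Fin.forall_val_le_iff, and_assoc]
    have hF' : H μ (fun ω => (fun j : {j : Fin n // i < j} => X ω j, Z ω)) = F (i + 1) :=
      H_congr μ fun ω ω' => by
        simp only [Prod.mk.injEq, funext_iff, Subtype.forall, Nat.add_one_le_iff, Fin.lt_def]
    have hG : H μ (fun ω => (Y ω, X ω i, fun j : {j : Fin n // i < j} => X ω j, Z ω)) = G i :=
      H_congr μ fun ω ω' => by
        simp only [Prod.mk.injEq, funext_iff, Subtype.forall, Fin.forall_val_le_iff, and_assoc]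
    have hG' : H μ (fun ω => (Y ω, fun j : {j : Fin n // i < j} => X ω j, Z ω)) = G (i + 1) :=
      H_congr μ fun ω ω' => by
        simp only [Prod.mk.injEq, funext_iff, Subtype.forall, Nat.add_one_le_iff, Fin.lt_def]
    unfold CMI
    rw [hF, hF', hG, hG']
    ring
  have hends : CMI μ Y X Z = (F 0 - F n) - (G 0 - G n) := by
    have hF0 : H μ (fun ω => (X ω, Z ω)) = F 0 :=
      H_congr μ fun ω ω' => by simp [funext_iff]
    have hFn : H μ Z = F n := H_congr μ fun ω ω' => by simp [funext_iff, Fin.is_lt]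
    have hG0 : H μ (fun ω => (Y ω, X ω, Z ω)) = G 0 :=
      H_congr μ fun ω ω' => by simp [funext_iff]
    have hGn : H μ (fun ω => (Y ω, Z ω)) = G n :=
      H_congr μ fun ω ω' => by simp [funext_iff, Fin.is_lt]
    unfold CMI
    rw [hF0, hFn, hG0, hGn]
    ring
  rw [Finset.sum_congr rfl fun i _ => hterm i,
    Fin.sum_univ_eq_sum_range (fun m => (F m - F (m + 1)) - (G m - G (m + 1))),
    Finset.sum_sub_distrib, Finset.sum_range_sub', Finset.sum_range_sub', hends]

end ChainRule

section Independence

variable {Ω κ α β γ σ : Type*} [Fintype Ω] (μ : Ω → ℝ)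

lemma dist_comp_fst_of_factor [Fintype α] [Fintype β] {A : Ω → α} {B : Ω → β}
    {f : α → ℝ} {g : β → ℝ}
    (hfac : ∀ a b, dist μ (fun ω => (A ω, B ω)) (a, b) = f a * g b) (φ : α → γ) :
    ∃ f' : γ → ℝ, ∀ c b, dist μ (fun ω => (φ (A ω), B ω)) (c, b) = f' c * g b := by
  classical
  refine ⟨fun c => ∑ a, if φ a = c then f a else 0, fun c b => ?_⟩
  rw [dist_comp μ (fun ω => (A ω, B ω)) fun p => (φ p.1, p.2), Fintype.sum_prod_type,
    Finset.sum_mul]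
  simp [hfac, ite_and]

lemma dist_drop_last_eq_sum {δ : Type*} [Fintype κ] [Fintype α] [Fintype β] [Fintype δ]
    (ν : κ × α × β × δ → ℝ) (k : κ) (a : α) (b : β) :
    dist ν (fun ω => (ω.1, ω.2.1, ω.2.2.1)) (k, a, b) = ∑ d, ν (k, a, b, d) := by
  classical
  simp only [dist_apply, Prod.mk.injEq, ite_and, Fintype.sum_prod_type, Finset.sum_ite_irrel,
    Finset.sum_const_zero, Finset.sum_ite_eq', Finset.mem_univ, if_true]
  rw [Fintype.sum_eq_single b fun x hx => by simp [hx]]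
  simp

variable {n : ℕ} {K : Ω → κ} {X : Ω → Fin n → α} {W : Ω → Fin n → σ} {pK : κ → ℝ}
  {q : α × σ → ℝ}

lemma dist_splitAt_eq_mul
    (hind : ∀ k x w, dist μ (fun ω => (K ω, X ω, W ω)) (k, x, w) = pK k * ∏ i, q (x i, w i))
    (i : Fin n) (k : κ) (xr : {j // j ≠ i} → α) (wr : {j // j ≠ i} → σ) (b : α) (c : σ) :
    dist μ (fun ω => ((K ω, fun j : {j // j ≠ i} => X ω j, fun j : {j // j ≠ i} => W ω j),
        X ω i, W ω i)) ((k, xr, wr), b, c)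
      = (pK k * ∏ j, q (xr j, wr j)) * q (b, c) := by
  rw [dist_congr μ (b := (k, (Equiv.funSplitAt i α).symm (b, xr),
    (Equiv.funSplitAt i σ).symm (c, wr))) fun ω => ?_, hind]
  · rw [← (Equiv.optionSubtypeNe i).prod_comp, Fintype.prod_option]
    simp only [Equiv.optionSubtypeNe_apply, Option.casesOn'_none, Option.casesOn'_some,
      Equiv.funSplitAt_symm_apply, ↓reduceDIte, fun j : {j // j ≠ i} => eq_false j.2,
      Subtype.coe_eta]
    ring
  · simp only [Prod.mk.injEq, Equiv.eq_symm_apply, Equiv.funSplitAt_apply]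
    tauto

lemma Equiv.funSplitAt_eq_iff {ι : Type*} [DecidableEq ι] (i : ι) {w w' : ι → σ} :
    w i = w' i ∧ (fun j : {j // j ≠ i} => w j) = (fun j : {j // j ≠ i} => w' j) ↔ w = w' := by
  rw [← (Equiv.funSplitAt i σ).apply_eq_iff_eq, Equiv.funSplitAt_apply, Equiv.funSplitAt_apply,
    Prod.mk.injEq]

variable [Fintype κ] [Fintype α] [Fintype β] [Fintype σ]

lemma CMI_coord_eq_chain_summand {μ : Ω → ℝ} (hμ : IsPMF μ)
    (hind : ∀ k x w, dist μ (fun ω => (K ω, X ω, W ω)) (k, x, w) = pK k * ∏ i, q (x i, w i))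
    (Y : Ω → β) (i : Fin n) :
    CMI μ (fun ω => (K ω, fun j : {j // i < j} => X ω j, Y ω, fun j : {j // j ≠ i} => W ω j))
        (fun ω => X ω i) (fun ω => W ω i)
      = CMI μ Y (fun ω => X ω i) (fun ω => (fun j : {j // i < j} => X ω j, K ω, W ω)) := by
  set C := fun ω => (K ω, fun j : {j // i < j} => X ω j, fun j : {j // j ≠ i} => W ω j)
  have hU : CMI μ (fun ω => (K ω, fun j : {j // i < j} => X ω j, Y ω,
        fun j : {j // j ≠ i} => W ω j)) (fun ω => X ω i) (fun ω => W ω i)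
      = CMI μ (fun ω => (C ω, Y ω)) (fun ω => X ω i) (fun ω => W ω i) :=
    CMI_congr μ (fun ω ω' => by simp only [C, Prod.mk.injEq]; tauto)
      (fun _ _ => Iff.rfl) (fun _ _ => Iff.rfl)
  have hindep : CMI μ C (fun ω => X ω i) (fun ω => W ω i) = 0 := by
    obtain ⟨f, hf⟩ := dist_comp_fst_of_factor μ
      (fun (d : κ × ({j // j ≠ i} → α) × ({j // j ≠ i} → σ)) (p : α × σ) =>
        dist_splitAt_eq_mul μ hind i d.1 d.2.1 d.2.2 p.1 p.2)
      fun d => (d.1, fun j : {j // i < j} => d.2.1 ⟨j, j.2.ne'⟩, d.2.2)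
    exact CMI_eq_zero_of_factor hμ fun a b c => hf a (b, c)
  have hcond : CMI μ Y (fun ω => X ω i) (fun ω => (C ω, W ω i))
      = CMI μ Y (fun ω => X ω i) (fun ω => (fun j : {j // i < j} => X ω j, K ω, W ω)) :=
    CMI_congr μ (fun _ _ => Iff.rfl) (fun _ _ => Iff.rfl) fun ω ω' => by
      simp only [C, Prod.mk.injEq, ← Equiv.funSplitAt_eq_iff i (w := W ω)]
      tauto
  rw [hU, CMI_pair_left, hindep, zero_add, hcond]

end Independence

section ConverseStepThm3

variable {K1 X1 W Yt1 : Type} [Fintype K1] [Fintype X1] [Fintype W] [Fintype Yt1]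

theorem converse_step_thm3_general {n : ℕ}
    (pK : K1 → ℝ)
    (qXW : X1 × W → ℝ)
    (μ : K1 × (Fin n → X1) × (Fin n → W) × (Fin n → Yt1) → ℝ)
    (hμ : IsPMF μ)
    (hmarg : ∀ k x w,
      (∑ yt : Fin n → Yt1, μ (k, x, w, yt)) = pK k * ∏ i, qXW (x i, w i)) :
    (∑ i : Fin n, H μ (fun ω => ω.2.2.2 i)) ≥ H μ (fun ω => ω.2.2.2) ∧
    H μ (fun ω => ω.2.2.2) ≥
      CMI μ (fun ω => ω.2.2.2) (fun ω => ω.2.1) (fun ω => (ω.1, ω.2.2.1)) ∧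
    CMI μ (fun ω => ω.2.2.2) (fun ω => ω.2.1) (fun ω => (ω.1, ω.2.2.1)) ≥
      ∑ i : Fin n, CMI μ
        (fun ω => (ω.1, fun j : {j : Fin n // i < j} => ω.2.1 j.1,
          ω.2.2.2, fun j : {j : Fin n // j ≠ i} => ω.2.2.1 j.1))
        (fun ω => ω.2.1 i)
        (fun ω => ω.2.2.1 i) := by
  have hind : ∀ k x w, dist μ (fun ω => (ω.1, ω.2.1, ω.2.2.1)) (k, x, w)
      = pK k * ∏ i, qXW (x i, w i) :=
    fun k x w => (dist_drop_last_eq_sum μ k x w).trans (hmarg k x w)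
  refine ⟨H_pi_le_sum hμ _, CMI_le_H_left hμ _ _ _, ?_⟩
  rw [CMI_pi_right_eq_sum μ]
  exact ge_of_eq (Finset.sum_congr rfl fun i _ => (CMI_coord_eq_chain_summand hμ hind _ i).symm)

/-- **First converse step in the proof of Theorem 3** (inequality (refnoisy1)).
Let `(X_{1i}, Wᵢ)` be i.i.d., `K1` independent of `(X1ⁿ, Wⁿ)`, and `Ỹ1ⁿ` any random
vector jointly distributed with them.  With
`U_{1i} = (K1, X_{1,i+1}ⁿ, Ỹ1ⁿ, W_{∼i})`:
`∑ᵢ H(Ỹ_{1i}) ≥ H(Ỹ1ⁿ) ≥ I(Ỹ1ⁿ; X1ⁿ | K1, Wⁿ) ≥ ∑ᵢ I(U_{1i}; X_{1i} | Wᵢ)`. -/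
theorem converse_step_thm3 {n : ℕ}
    (pK : K1 → ℝ) (hpK : IsPMF pK)
    (qXW : X1 × W → ℝ) (hqXW : IsPMF qXW)
    (μ : K1 × (Fin n → X1) × (Fin n → W) × (Fin n → Yt1) → ℝ)
    (hμ : IsPMF μ)
    (hmarg : ∀ k x w,
      (∑ yt : Fin n → Yt1, μ (k, x, w, yt)) = pK k * ∏ i, qXW (x i, w i)) :
    (∑ i : Fin n, H μ (fun ω => ω.2.2.2 i)) ≥ H μ (fun ω => ω.2.2.2) ∧
    H μ (fun ω => ω.2.2.2) ≥
      CMI μ (fun ω => ω.2.2.2) (fun ω => ω.2.1) (fun ω => (ω.1, ω.2.2.1)) ∧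
    CMI μ (fun ω => ω.2.2.2) (fun ω => ω.2.1) (fun ω => (ω.1, ω.2.2.1)) ≥
      ∑ i : Fin n, CMI μ
        (fun ω => (ω.1, fun j : {j : Fin n // i < j} => ω.2.1 j.1,
          ω.2.2.2, fun j : {j : Fin n // j ≠ i} => ω.2.2.1 j.1))
        (fun ω => ω.2.1 i)
        (fun ω => ω.2.2.1 i) :=
  converse_step_thm3_general pK qXW μ hμ hmarg

end ConverseStepThm3

end SecCoord
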